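/- arXiv:0903.4843 — 2 statements merged into one kernel-verified Lean document; each statement's English description precedes it below -/
import Mathlib

section
/- Let H be the real vector space of Hermitian d×d complex matrices with the Hilbert–Schmidt inner product. Suppose {F_i}_{i=1}^n and {D_i}_{i=1}^n are families of Hermitian matrices with all F_i and all D_i positive semidefinite, Σ_i F_i = 1 (the identity matrix), and A = Σ_i Tr(F_i A) D_i for all Hermitian A (i.e., {D_i} is a dual frame to {F_i}). Then d = 1. Equivalently, for d ≥ 2 no positive frame has a positive dual frame. -/
/-!
The dual frame identity `A = ∑ i, Tr (F i * A) • D i`, applied to `A = v vᴴ` and read as a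
quadratic form at `w`, gives `|⟪v, w⟫|² = ∑ i, ⟪v, F i v⟫ ⟪w, D i w⟫`, a sum of nonnegative
terms. For `v = w ≠ 0` some index `i` has both factors nonzero; for `w ⊥ v` every term
vanishes, so such an `i` forces `F i` to kill the hyperplane `v⊥`. Two non-parallel vectors
cannot share such an index, since `F i` would then kill `v⊥ + v'⊥`, the whole space. In
dimension at least two there are infinitely many pairwise non-parallel vectors `e₀ + t e₁`,
but only finitely many indices.
-/

open Matrix
open scoped ComplexOrder

namespace Matrix

variable {𝕜 m ι : Type*} [RCLike 𝕜]

section Line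

variable [DecidableEq m] {a b : m}

theorem single_add_smul_single_ne_zero (hab : a ≠ b) (t : 𝕜) :
    Pi.single a 1 + t • Pi.single b (1 : 𝕜) ≠ 0 := fun h => by
  simpa [hab.symm] using congrFun h a

theorem star_smul_single_sub_single_dotProduct [Fintype m] (hab : a ≠ b) (t : ℝ) :
    star ((t : 𝕜) • Pi.single a 1 - Pi.single b 1) ⬝ᵥ
      (Pi.single a 1 + (t : 𝕜) • Pi.single b 1) = 0 := by
  simp [star_sub, star_smul, dotProduct_add, dotProduct_smul, hab, hab.symm]

theorem mulVec_single_add_smul_single_eq_zero [Fintype m] {M : Matrix m m 𝕜} {t s : 𝕜}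
    (hts : t ≠ s) (ht : M *ᵥ (t • Pi.single a 1 - Pi.single b 1) = 0)
    (hs : M *ᵥ (s • Pi.single a 1 - Pi.single b 1) = 0) :
    M *ᵥ (Pi.single a 1 + t • Pi.single b 1) = 0 := by
  rw [mulVec_sub, mulVec_smul] at ht hs
  have ha : M *ᵥ Pi.single a 1 = 0 := by
    have : (t - s) • M *ᵥ Pi.single a 1 = 0 := by
      rw [sub_smul]; linear_combination (exp := 1) ht - hs
    exact (smul_eq_zero.mp this).resolve_left (sub_ne_zero.mpr hts)
  have hb : M *ᵥ Pi.single b 1 = 0 := by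
    rwa [ha, smul_zero, zero_sub, neg_eq_zero] at ht
  rw [mulVec_add, mulVec_smul, ha, hb, smul_zero, add_zero]

end Line

variable [Fintype m] [Fintype ι]

theorem trace_mul_vecMulVec_star (M : Matrix m m 𝕜) (v : m → 𝕜) :
    (M * vecMulVec v (star v)).trace = star v ⬝ᵥ M *ᵥ v := by
  rw [mul_vecMulVec, trace_vecMulVec, dotProduct_comm]

theorem dotProduct_vecMulVec_star_mulVec (v w : m → 𝕜) :
    star w ⬝ᵥ vecMulVec v (star v) *ᵥ w = (star w ⬝ᵥ v) * (star v ⬝ᵥ w) := by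
  rw [vecMulVec_mulVec, op_smul_eq_smul, dotProduct_smul, smul_eq_mul, mul_comm]

def IsDualFrame (F D : ι → Matrix m m 𝕜) : Prop :=
  ∀ A : Matrix m m 𝕜, A.IsHermitian → A = ∑ i, (F i * A).trace • D i

namespace IsDualFrame

variable {F D : ι → Matrix m m 𝕜}

theorem dotProduct_mul_dotProduct (h : IsDualFrame F D) (v w : m → 𝕜) :
    (star w ⬝ᵥ v) * (star v ⬝ᵥ w) = ∑ i, (star v ⬝ᵥ F i *ᵥ v) * (star w ⬝ᵥ D i *ᵥ w) := by
  conv_lhs =>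
    rw [← dotProduct_vecMulVec_star_mulVec, h _ (posSemidef_vecMulVec_self_star v).isHermitian]
  simp only [sum_mulVec, dotProduct_sum, smul_mulVec, dotProduct_smul, smul_eq_mul,
    trace_mul_vecMulVec_star]

theorem exists_dotProduct_mulVec_ne_zero (h : IsDualFrame F D) {v : m → 𝕜} (hv : v ≠ 0) :
    ∃ i, star v ⬝ᵥ F i *ᵥ v ≠ 0 ∧ star v ⬝ᵥ D i *ᵥ v ≠ 0 := by
  by_contra! hvanish
  have hsum := h.dotProduct_mul_dotProduct v v
  rw [Finset.sum_eq_zero fun i _ => mul_eq_zero_of_ne_zero_imp_eq_zero (hvanish i)] at hsum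
  exact hv (dotProduct_star_self_eq_zero.mp (mul_self_eq_zero.mp hsum))

variable (hF : ∀ i, (F i).PosSemidef) (hD : ∀ i, (D i).PosSemidef)
include hF hD

theorem mulVec_eq_zero_of_dotProduct_eq_zero (h : IsDualFrame F D) {u v : m → 𝕜}
    (huv : star u ⬝ᵥ v = 0) {i : ι} (hi : star v ⬝ᵥ D i *ᵥ v ≠ 0) : F i *ᵥ u = 0 := by
  have hsum := h.dotProduct_mul_dotProduct u v
  have hterm_nonneg : ∀ j ∈ Finset.univ, 0 ≤ (star u ⬝ᵥ F j *ᵥ u) * (star v ⬝ᵥ D j *ᵥ v) :=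
    fun j _ => mul_nonneg ((hF j).dotProduct_mulVec_nonneg u) ((hD j).dotProduct_mulVec_nonneg v)
  rw [huv, mul_zero, eq_comm, Finset.sum_eq_zero_iff_of_nonneg hterm_nonneg] at hsum
  exact ((hF i).dotProduct_mulVec_zero_iff u).mp
    ((mul_eq_zero.mp (hsum i (Finset.mem_univ i))).resolve_right hi)

theorem eq_of_dotProduct_mulVec_single_add_smul_single_ne_zero [DecidableEq m]
    (h : IsDualFrame F D) {a b : m} (hab : a ≠ b) {t s : ℝ} {i : ι}
    (hFt : star (Pi.single a 1 + (t : 𝕜) • Pi.single b 1) ⬝ᵥ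
      F i *ᵥ (Pi.single a 1 + (t : 𝕜) • Pi.single b 1) ≠ 0)
    (hDt : star (Pi.single a 1 + (t : 𝕜) • Pi.single b 1) ⬝ᵥ
      D i *ᵥ (Pi.single a 1 + (t : 𝕜) • Pi.single b 1) ≠ 0)
    (hDs : star (Pi.single a 1 + (s : 𝕜) • Pi.single b 1) ⬝ᵥ
      D i *ᵥ (Pi.single a 1 + (s : 𝕜) • Pi.single b 1) ≠ 0) :
    t = s := by
  by_contra hts
  apply hFt
  rw [mulVec_single_add_smul_single_eq_zero (RCLike.ofReal_injective.ne hts)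
      (h.mulVec_eq_zero_of_dotProduct_eq_zero hF hD
        (star_smul_single_sub_single_dotProduct hab t) hDt)
      (h.mulVec_eq_zero_of_dotProduct_eq_zero hF hD
        (star_smul_single_sub_single_dotProduct hab s) hDs),
    dotProduct_zero]

end IsDualFrame

end Matrix

theorem no_positive_frame_with_positive_dual_general {d n : ℕ} (hd : 2 ≤ d)
    (F D : Fin n → Matrix (Fin d) (Fin d) ℂ)
    (hFpos : ∀ i, (F i).PosSemidef) (hDpos : ∀ i, (D i).PosSemidef)
    (hdual : ∀ A : Matrix (Fin d) (Fin d) ℂ, A.IsHermitian →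
      A = ∑ i, (F i * A).trace • D i) :
    False := by
  have hframe : IsDualFrame F D := hdual
  have hab : (⟨0, by omega⟩ : Fin d) ≠ ⟨1, by omega⟩ := by simp
  choose g hgF hgD using fun t : ℝ =>
    hframe.exists_dotProduct_mulVec_ne_zero (single_add_smul_single_ne_zero hab (t : ℂ))
  exact not_injective_infinite_finite g fun t s hts =>
    hframe.eq_of_dotProduct_mulVec_single_add_smul_single_ne_zero hFpos hDpos hab
      (hgF t) (hgD t) (hts ▸ hgD s)

theorem no_positive_frame_with_positive_dual {d n : ℕ} (hd : 2 ≤ d)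
    (F D : Fin n → Matrix (Fin d) (Fin d) ℂ)
    (hFpos : ∀ i, (F i).PosSemidef) (hDpos : ∀ i, (D i).PosSemidef)
    (hsum : ∑ i, F i = 1)
    (hdual : ∀ A : Matrix (Fin d) (Fin d) ℂ, A.IsHermitian →
      A = ∑ i, (F i * A).trace • D i) :
    False :=
  no_positive_frame_with_positive_dual_general hd F D hFpos hDpos hdual
end

section
/- There is no classical representation of quantum theory in finite dimension d ≥ 2 over a finite ontic space: there do not exist a finite set Λ and maps μ : D(ℂ^d) → probability distributions on Λ and ξ : E(ℂ^d) → [0,1]^Λ such that Tr(ρE) = Σ_λ μ_ρ(λ) ξ_E(λ) for all density operators ρ and effects E. -/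
/-! A pure state `ψ` is accepted with certainty by its own projector, so in a classical model the
response function of that projector equals `1` on the support of `μ_ψ`. If two pure states had the
same support, each would accept the other with certainty, i.e. `|⟨ψ, φ⟩| = 1`. So `ψ ↦ supp μ_ψ`
is injective on the pairwise non-parallel states `cos t e₀ + sin t e₁`, `0 < t < π`, of which there
are infinitely many, while a finite `Λ` has only finitely many subsets. -/

open Matrix
open scoped ComplexOrder

section ClassicalModel

variable {Λ : Type*} [Fintype Λ]

theorem eq_one_of_sum_mul_eq_one {p f : Λ → ℝ} (hp : ∀ l, 0 ≤ p l) (hp1 : ∑ l, p l = 1)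
    (hf : ∀ l, f l ≤ 1) (h : ∑ l, p l * f l = 1) {l : Λ} (hl : p l ≠ 0) : f l = 1 := by
  have hdefect : ∑ l, p l * (1 - f l) = 0 := by
    simp only [mul_sub, mul_one, Finset.sum_sub_distrib, hp1, h, sub_self]
  have hterm := (Finset.sum_eq_zero_iff_of_nonneg fun l _ =>
    mul_nonneg (hp l) (sub_nonneg.2 (hf l))).1 hdefect l (Finset.mem_univ l)
  linarith [(mul_eq_zero.1 hterm).resolve_left hl]

theorem sum_mul_eq_one_of_eq_one_on_support {p f : Λ → ℝ} (hp1 : ∑ l, p l = 1)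
    (hf : ∀ l, p l ≠ 0 → f l = 1) : ∑ l, p l * f l = 1 := by
  rw [← hp1]
  refine Finset.sum_congr rfl fun l _ => ?_
  by_cases hl : p l = 0
  · simp [hl]
  · rw [hf l hl, mul_one]

/-- A state's support determines which response functions accept it with certainty. -/
theorem finite_of_sum_mul_eq_one_iff {ι : Type*} (μ ξ : ι → Λ → ℝ)
    (hμ : ∀ i, (∀ l, 0 ≤ μ i l) ∧ ∑ l, μ i l = 1) (hξ : ∀ i l, ξ i l ≤ 1)
    (h : ∀ i j, ∑ l, μ i l * ξ j l = 1 ↔ i = j) : Finite ι := by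
  refine Finite.of_injective (fun i => Function.support (μ i)) fun i j hsupp => ?_
  refine ((h j i).1 (sum_mul_eq_one_of_eq_one_on_support (hμ j).2 fun l hl => ?_)).symm
  have hl' : μ i l ≠ 0 := (Set.ext_iff.1 hsupp l).2 hl
  exact eq_one_of_sum_mul_eq_one (hμ i).1 (hμ i).2 (hξ i) ((h i i).2 rfl) hl'

end ClassicalModel

namespace Matrix

variable {n R : Type*} [Fintype n]

theorem trace_vecMulVec_mul_vecMulVec [CommSemiring R] (u v w x : n → R) :
    trace (vecMulVec u v * vecMulVec w x) = (v ⬝ᵥ w) * (u ⬝ᵥ x) := by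
  rw [vecMulVec_mul_vecMulVec, trace_vecMulVec, dotProduct_smul, smul_eq_mul]

theorem PosSemidef.one_sub_of_isHermitian_of_mul_self [DecidableEq n] [CommRing R]
    [PartialOrder R] [StarRing R] [StarOrderedRing R] {P : Matrix n n R} (hP : P.IsHermitian)
    (hPP : P * P = P) : (1 - P).PosSemidef := by
  have hherm : (1 - P).IsHermitian := isHermitian_one.sub hP
  have hidem : (1 - P) * (1 - P) = 1 - P := by
    rw [sub_mul, mul_sub, mul_sub, hPP]; simp
  have hgram := posSemidef_conjTranspose_mul_self (1 - P)
  rwa [hherm.eq, hidem] at hgram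

theorem trace_vecMulVec_self_star [CommSemiring R] [StarRing R] (u : n → R) :
    trace (vecMulVec u (star u)) = star u ⬝ᵥ u := by
  rw [trace_vecMulVec, dotProduct_comm]

theorem vecMulVec_self_star_mul_self [CommSemiring R] [StarRing R] {u : n → R}
    (hu : star u ⬝ᵥ u = 1) : vecMulVec u (star u) * vecMulVec u (star u) = vecMulVec u (star u) := by
  rw [vecMulVec_mul_vecMulVec, hu, one_smul]

section CosSinVec

variable [DecidableEq n]

noncomputable def cosSinVec (i j : n) (t : ℝ) : n → ℂ :=
  (Real.cos t : ℂ) • Pi.single i 1 + (Real.sin t : ℂ) • Pi.single j 1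

omit [Fintype n] in
theorem star_cosSinVec (i j : n) (t : ℝ) : star (cosSinVec i j t) = cosSinVec i j t := by
  simp [cosSinVec, Pi.star_single, -Complex.ofReal_cos, -Complex.ofReal_sin]

theorem cosSinVec_dotProduct_cosSinVec {i j : n} (hij : i ≠ j) (s t : ℝ) :
    cosSinVec i j s ⬝ᵥ cosSinVec i j t = Real.cos (s - t) := by
  simp [cosSinVec, dotProduct_add, dotProduct_smul, hij, hij.symm, Real.cos_sub]
  ring

theorem star_cosSinVec_dotProduct_self {i j : n} (hij : i ≠ j) (t : ℝ) :
    star (cosSinVec i j t) ⬝ᵥ cosSinVec i j t = 1 := by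
  rw [star_cosSinVec, cosSinVec_dotProduct_cosSinVec hij, sub_self, Real.cos_zero,
    Complex.ofReal_one]

theorem trace_vecMulVec_cosSinVec_mul {i j : n} (hij : i ≠ j) (s t : ℝ) :
    trace (vecMulVec (cosSinVec i j s) (star (cosSinVec i j s)) *
      vecMulVec (cosSinVec i j t) (star (cosSinVec i j t))) =
      ((Real.cos (s - t) ^ 2 : ℝ) : ℂ) := by
  rw [trace_vecMulVec_mul_vecMulVec, star_cosSinVec, star_cosSinVec,
    cosSinVec_dotProduct_cosSinVec hij, Complex.ofReal_pow, sq]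

end CosSinVec

end Matrix

open Real in
theorem Real.cos_sub_sq_eq_one_iff {s t : ℝ} (hs : s ∈ Set.Ioo 0 π) (ht : t ∈ Set.Ioo 0 π) :
    cos (s - t) ^ 2 = 1 ↔ s = t := by
  rw [cos_sq', sub_eq_self, sq_eq_zero_iff,
    sin_eq_zero_iff_of_lt_of_lt (by linarith [hs.1, ht.2]) (by linarith [hs.2, ht.1]), sub_eq_zero]

theorem no_classical_representation {d : ℕ} (hd : 2 ≤ d) :
    ¬ ∃ (Λ : Type) (_ : Fintype Λ)
        (μ : {ρ : Matrix (Fin d) (Fin d) ℂ // ρ.PosSemidef ∧ ρ.trace = 1} → Λ → ℝ)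
        (ξ : {E : Matrix (Fin d) (Fin d) ℂ // E.PosSemidef ∧ (1 - E).PosSemidef} → Λ → ℝ),
      (∀ ρ, (∀ l, 0 ≤ μ ρ l) ∧ ∑ l, μ ρ l = 1) ∧
      (∀ E l, 0 ≤ ξ E l ∧ ξ E l ≤ 1) ∧
      (∀ ρ E, ((ρ.1 * E.1).trace : ℂ) = ((∑ l, μ ρ l * ξ E l : ℝ) : ℂ)) := by
  rintro ⟨Λ, _, μ, ξ, hμ, hξ, hTr⟩
  let i : Fin d := ⟨0, by omega⟩
  let j : Fin d := ⟨1, by omega⟩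
  have hij : i ≠ j := by simp [i, j]
  let P (t : Set.Ioo 0 Real.pi) := vecMulVec (cosSinVec i j t) (star (cosSinVec i j t))
  have hP (t : Set.Ioo 0 Real.pi) : (P t).PosSemidef := posSemidef_vecMulVec_self_star _
  let ρ (t : Set.Ioo 0 Real.pi) : {ρ : Matrix (Fin d) (Fin d) ℂ // ρ.PosSemidef ∧ ρ.trace = 1} :=
    ⟨P t, hP t, by rw [trace_vecMulVec_self_star, star_cosSinVec_dotProduct_self hij]⟩
  let E (t : Set.Ioo 0 Real.pi) :
      {E : Matrix (Fin d) (Fin d) ℂ // E.PosSemidef ∧ (1 - E).PosSemidef} :=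
    ⟨P t, hP t, PosSemidef.one_sub_of_isHermitian_of_mul_self (hP t).isHermitian
      (vecMulVec_self_star_mul_self (star_cosSinVec_dotProduct_self hij _))⟩
  have hBorn (s t : Set.Ioo 0 Real.pi) : ∑ l, μ (ρ s) l * ξ (E t) l = Real.cos (s - t) ^ 2 := by
    have h := hTr (ρ s) (E t)
    rw [trace_vecMulVec_cosSinVec_mul hij] at h
    exact_mod_cast h.symm
  have : Finite (Set.Ioo 0 Real.pi) :=
    finite_of_sum_mul_eq_one_iff (fun t => μ (ρ t)) (fun t => ξ (E t)) (fun t => hμ (ρ t))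
      (fun t l => (hξ (E t) l).2) fun s t => by
        rw [hBorn, Real.cos_sub_sq_eq_one_iff s.2 t.2, Subtype.coe_inj]
  exact Set.Ioo_infinite Real.pi_pos (Set.toFinite _)
end
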